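/- For any q > 0, there is a *-algebra isomorphism between A(S^{2n+1}_q) and A(S^{2n+1}_{q^{-1}}). -/

import Mathlib

noncomputable section

namespace QAlg

/-- Generators of a free *-algebra: `inl i` is the generator `z i`, and
`inr i` is its formal adjoint `(z i)*`. -/
abbrev Gen (X : Type) := X ⊕ X

/-- The free algebra on the doubled generating set, realized as the monoid
algebra of the free monoid. -/
abbrev F (X : Type) := MonoidAlgebra ℂ (FreeMonoid (Gen X))

/-- The *-operation on words: reverse the word and exchange the two copies
of the generators. -/
def wordStar {X : Type} (w : FreeMonoid (Gen X)) : FreeMonoid (Gen X) :=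
  FreeMonoid.ofList (((FreeMonoid.toList w).map Sum.swap).reverse)

lemma wordStar_mul {X : Type} (w v : FreeMonoid (Gen X)) :
    wordStar (w * v) = wordStar v * wordStar w := by
  simp [wordStar, FreeMonoid.toList_mul, FreeMonoid.ofList_append]

lemma wordStar_wordStar {X : Type} (w : FreeMonoid (Gen X)) : wordStar (wordStar w) = w := by
  simp [wordStar, List.map_reverse, List.map_map, Sum.swap_swap_eq]

/-- The canonical conjugate-linear antimultiplicative involution on the free
algebra `F X`, determined by `star (z i) = (z i)*` and complex conjugation
on scalars. -/
def starF {X : Type} (f : F X) : F X :=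
  Finsupp.sum f.coeff fun w c => MonoidAlgebra.single (wordStar w) ((starRingEnd ℂ) c)

lemma starF_single {X : Type} (w : FreeMonoid (Gen X)) (c : ℂ) :
    starF (MonoidAlgebra.single w c) = MonoidAlgebra.single (wordStar w) ((starRingEnd ℂ) c) := by
  classical
  rw [starF, MonoidAlgebra.coeff_single]
  refine Finsupp.sum_single_index ?_
  simp

lemma starF_zero {X : Type} : starF (0 : F X) = 0 := by
  rw [starF, MonoidAlgebra.coeff_zero]; exact Finsupp.sum_zero_index

lemma starF_add {X : Type} (f g : F X) : starF (f + g) = starF f + starF g := by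
  classical
  rw [starF, starF, starF, MonoidAlgebra.coeff_add]
  refine Finsupp.sum_add_index' (fun w => by simp) (fun w c₁ c₂ => by
    simp [map_add, MonoidAlgebra.single_add])

lemma starF_single_mul {X : Type} (w : FreeMonoid (Gen X)) (c : ℂ) (g : F X) :
    starF (MonoidAlgebra.single w c * g) = starF g * starF (MonoidAlgebra.single w c) := by
  classical
  induction g using MonoidAlgebra.induction with
  | zero => simp [starF_zero]
  | single_add v d g _ _ ihg =>
    rw [mul_add, starF_add, starF_add, add_mul, ihg]
    congr 1
    rw [MonoidAlgebra.single_mul_single, starF_single, starF_single, starF_single,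
      MonoidAlgebra.single_mul_single, wordStar_mul, map_mul, mul_comm]

lemma starF_mul {X : Type} (f g : F X) : starF (f * g) = starF g * starF f := by
  classical
  induction f using MonoidAlgebra.induction with
  | zero => simp [starF_zero]
  | single_add w c f _ _ ih =>
    rw [add_mul, starF_add, starF_add, ih, mul_add, starF_single_mul]

lemma starF_starF {X : Type} (f : F X) : starF (starF f) = f := by
  classical
  induction f using MonoidAlgebra.induction with
  | zero => simp [starF_zero]
  | single_add w c f _ _ ih =>
    rw [starF_add, starF_add, ih, starF_single, starF_single, wordStar_wordStar,
      Complex.conj_conj]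

/-- The free *-algebra structure on `F X`. -/
def starRingF (X : Type) : StarRing (F X) where
  star := starF
  star_involutive := starF_starF
  star_mul := starF_mul
  star_add := starF_add

/-- The generator `z i` inside the free *-algebra. -/
def zF {X : Type} (i : X) : F X := MonoidAlgebra.of ℂ _ (FreeMonoid.of (Sum.inl i))

/-- The formal adjoint `(z i)*` inside the free *-algebra. -/
def zsF {X : Type} (i : X) : F X := MonoidAlgebra.of ℂ _ (FreeMonoid.of (Sum.inr i))

/-- The defining relations of the Vaksman-Soibelman quantum sphere
`S^{2n+1}_q` (with `zsF i` playing the role of `(z i)*`), together with their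
images under the *-operation, so that the quotient below is the universal
unital *-algebra on the generators `z 0, ..., z n` with these relations. -/
inductive srel (n : ℕ) (q : ℝ) : F (Fin (n + 1)) → F (Fin (n + 1)) → Prop
  | comm_zz {i j : Fin (n + 1)} (h : i < j) :
      srel n q (zF j * zF i) ((q : ℂ) • (zF i * zF j))
  | comm_zsz {i j : Fin (n + 1)} (h : i ≠ j) :
      srel n q (zsF i * zF j) ((q : ℂ) • (zF j * zsF i))
  | ccr (i : Fin (n + 1)) :
      srel n q (zsF i * zF i)
        (zF i * zsF i + ((1 - q ^ 2 : ℝ) : ℂ) • ∑ j ∈ Finset.Ioi i, zF j * zsF j)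
  | sphere_eq : srel n q (∑ j, zF j * zsF j) 1
  | star_rel {a b} : srel n q a b → srel n q (starF a) (starF b)

/-- The coordinate *-algebra `A(S^{2n+1}_q)` of the quantum sphere. -/
abbrev Sphere (n : ℕ) (q : ℝ) := RingQuot (srel n q)

noncomputable instance (n : ℕ) (q : ℝ) : StarRing (Sphere n q) :=
  @RingQuot.starRing _ _ (starRingF _) (srel n q) (fun _ _ h => srel.star_rel h)

/-- The generator `z i` of the quantum sphere algebra. -/
def z (n : ℕ) (q : ℝ) (i : Fin (n + 1)) : Sphere n q :=
  RingQuot.mkAlgHom ℂ (srel n q) (zF i)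

/-!
For `q p = 1`, the assignment `z i ↦ p^i (z i)*` respects the relations of `A(S^{2n+1}_q)`
inside `A(S^{2n+1}_p)`: the commutation relations are carried to commutation relations of
`S_p` or their adjoints, and the relation for `(z i)* z i`, as well as the sphere relation,
reduce to the identity `∑_{j > i} p^{2j} (z j)* z j = p^{2(i+1)} ∑_{j > i} z j (z j)*` in `S_p`,
which follows from the relations for `(z j)* z j` by downward induction on `i`. The maps for
`(q, p)` and `(p, q)` are mutually inverse because `p^i q^i = 1`.
-/

lemma starF_smul {X : Type} (c : ℂ) (f : F X) :
    starF (c • f) = starRingEnd ℂ c • starF f := by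
  induction f using MonoidAlgebra.induction with
  | zero => simp [starF_zero]
  | single_add w d f _ _ ih =>
    rw [smul_add, starF_add, starF_add, ih, smul_add, MonoidAlgebra.smul_single, starF_single,
      starF_single, MonoidAlgebra.smul_single, smul_eq_mul, smul_eq_mul, map_mul]

lemma starF_zF {X : Type} (i : X) : starF (zF i) = zsF i := by
  rw [zF, zsF, MonoidAlgebra.of_apply, MonoidAlgebra.of_apply, starF_single, map_one]
  rfl

section FreeLift

variable {X A : Type} [Semiring A] [Algebra ℂ A]

def freeLift (g : Gen X → A) : F X →ₐ[ℂ] A :=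
  MonoidAlgebra.lift ℂ A (FreeMonoid (Gen X)) (FreeMonoid.lift g)

lemma freeLift_zF (g : Gen X → A) (i : X) : freeLift g (zF i) = g (Sum.inl i) := by
  rw [freeLift, zF, MonoidAlgebra.lift_of, FreeMonoid.lift_eval_of]

lemma freeLift_zsF (g : Gen X → A) (i : X) : freeLift g (zsF i) = g (Sum.inr i) := by
  rw [freeLift, zsF, MonoidAlgebra.lift_of, FreeMonoid.lift_eval_of]

lemma freeLift_starF [StarRing A] [StarModule ℂ A] {g : Gen X → A}
    (hg : ∀ s, g s.swap = star (g s)) (f : F X) :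
    freeLift g (starF f) = star (freeLift g f) := by
  have hword : ∀ w, FreeMonoid.lift g (wordStar w) = star (FreeMonoid.lift g w) := by
    intro w
    rw [wordStar, FreeMonoid.lift_apply, FreeMonoid.lift_apply, FreeMonoid.toList_ofList]
    induction FreeMonoid.toList w with
    | nil => simp
    | cons s l ih =>
      simp only [List.map_cons, List.reverse_cons, List.map_append, List.prod_append,
        List.map_nil, List.prod_cons, List.prod_nil, mul_one, star_mul, ih, hg]
  induction f using MonoidAlgebra.induction with
  | zero => simp [starF_zero]
  | single_add w c f _ _ ih =>
    rw [starF_add, map_add, map_add, star_add, ih, starF_single, freeLift,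
      MonoidAlgebra.lift_single, MonoidAlgebra.lift_single, hword, star_smul]
    rfl

end FreeLift

lemma sum_Ioi_pow_smul_of_eq_add_sum_Ioi {R M : Type*} [CommRing R] [AddCommGroup M]
    [Module R M] {n : ℕ} (p : R) {x y : Fin (n + 1) → M}
    (h : ∀ i, x i = y i + (1 - p ^ 2) • ∑ j ∈ Finset.Ioi i, y j) (i : Fin (n + 1)) :
    ∑ j ∈ Finset.Ioi i, p ^ (2 * (j : ℕ)) • x j
      = p ^ (2 * ((i : ℕ) + 1)) • ∑ j ∈ Finset.Ioi i, y j := by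
  induction i using Fin.reverseInduction with
  | last => simp [← Fin.top_eq_last]
  | cast i ih =>
    have hIoi : Finset.Ioi i.castSucc = insert i.succ (Finset.Ioi i.succ) := by
      ext j
      simp only [Finset.mem_Ioi, Finset.mem_insert, Fin.lt_def, Fin.ext_iff, Fin.val_succ,
        Fin.val_castSucc]
      omega
    rw [hIoi, Finset.sum_insert (by simp), Finset.sum_insert (by simp), ih, h, Fin.val_succ,
      Fin.val_castSucc]
    module

lemma sum_pow_smul_of_eq_add_sum_Ioi {R M : Type*} [CommRing R] [AddCommGroup M]
    [Module R M] {n : ℕ} (p : R) {x y : Fin (n + 1) → M}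
    (h : ∀ i, x i = y i + (1 - p ^ 2) • ∑ j ∈ Finset.Ioi i, y j) :
    ∑ j : Fin (n + 1), p ^ (2 * (j : ℕ)) • x j = ∑ j, y j := by
  rw [← Finset.Ici_bot, ← Finset.Ioi_insert, Finset.sum_insert Finset.notMem_Ioi_self,
    Finset.sum_insert Finset.notMem_Ioi_self, sum_Ioi_pow_smul_of_eq_add_sum_Ioi p h, h,
    bot_eq_zero, Fin.val_zero]
  module

section Relations

variable (n : ℕ) (q : ℝ)

lemma star_mkAlgHom (x : F (Fin (n + 1))) :
    star (RingQuot.mkAlgHom ℂ (srel n q) x) = RingQuot.mkAlgHom ℂ (srel n q) (starF x) := by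
  simp only [RingQuot.mkAlgHom_def, RingQuot.mkRingHom_def]
  rfl

instance : StarModule ℂ (Sphere n q) where
  star_smul c x := by
    obtain ⟨x, rfl⟩ := RingQuot.mkAlgHom_surjective ℂ (srel n q) x
    rw [← map_smul, star_mkAlgHom, star_mkAlgHom, starF_smul, map_smul, starRingEnd_apply]

lemma star_z (i : Fin (n + 1)) : star (z n q i) = RingQuot.mkAlgHom ℂ (srel n q) (zsF i) := by
  rw [z, star_mkAlgHom, starF_zF]

variable {n q}

lemma z_mul_z_of_lt {i j : Fin (n + 1)} (h : i < j) :
    z n q j * z n q i = (q : ℂ) • (z n q i * z n q j) := by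
  have := RingQuot.mkAlgHom_rel ℂ (srel.comm_zz (n := n) (q := q) h)
  rwa [map_mul, map_smul, map_mul] at this

lemma star_z_mul_star_z_of_lt {i j : Fin (n + 1)} (h : i < j) :
    star (z n q i) * star (z n q j) = (q : ℂ) • (star (z n q j) * star (z n q i)) := by
  rw [← star_mul, z_mul_z_of_lt h, star_smul, star_mul, Complex.star_def, Complex.conj_ofReal]

lemma star_z_mul_z_of_ne {i j : Fin (n + 1)} (h : i ≠ j) :
    star (z n q i) * z n q j = (q : ℂ) • (z n q j * star (z n q i)) := by
  have := RingQuot.mkAlgHom_rel ℂ (srel.comm_zsz (n := n) (q := q) h)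
  rwa [map_mul, map_smul, map_mul, ← star_z] at this

lemma star_z_mul_z_self (i : Fin (n + 1)) :
    star (z n q i) * z n q i
      = z n q i * star (z n q i)
        + (1 - (q : ℂ) ^ 2) • ∑ j ∈ Finset.Ioi i, z n q j * star (z n q j) := by
  have := RingQuot.mkAlgHom_rel ℂ (srel.ccr (n := n) (q := q) i)
  simp only [map_mul, map_add, map_smul, map_sum, ← star_z] at this
  exact_mod_cast this

lemma sum_z_mul_star_z : ∑ j, z n q j * star (z n q j) = 1 := by
  have := RingQuot.mkAlgHom_rel ℂ (srel.sphere_eq (n := n) (q := q))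
  simp only [map_sum, map_mul, map_one, ← star_z] at this
  exact this

lemma Sphere.starAlgHom_ext {A : Type} [Semiring A] [Algebra ℂ A] [Star A]
    {f g : Sphere n q →⋆ₐ[ℂ] A} (h : ∀ i, f (z n q i) = g (z n q i)) : f = g := by
  suffices f.toAlgHom = g.toAlgHom from StarAlgHom.ext (AlgHom.congr_fun this)
  refine RingQuot.ringQuot_ext' _ _ _ <| MonoidAlgebra.algHom_ext' ?_ (Subsingleton.elim _ _)
  refine FreeMonoid.hom_eq fun s => ?_
  cases s with
  | inl i => exact h i
  | inr i =>
    change f (RingQuot.mkAlgHom ℂ (srel n q) (zsF i)) =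
      g (RingQuot.mkAlgHom ℂ (srel n q) (zsF i))
    rw [← star_z, map_star, map_star, h]

end Relations

section Inversion

variable {n : ℕ} {q p : ℝ}

variable (n p) in
def invGen : Gen (Fin (n + 1)) → Sphere n p
  | Sum.inl i => (p : ℂ) ^ (i : ℕ) • star (z n p i)
  | Sum.inr i => (p : ℂ) ^ (i : ℕ) • z n p i

lemma invGen_swap (s : Gen (Fin (n + 1))) : invGen n p s.swap = star (invGen n p s) := by
  cases s <;> simp [invGen, star_smul]

lemma freeLift_invGen_rel (hqp : q * p = 1) ⦃a b : F (Fin (n + 1))⦄ (h : srel n q a b) :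
    freeLift (invGen n p) a = freeLift (invGen n p) b := by
  have hqp : (q : ℂ) * p = 1 := by exact_mod_cast hqp
  induction h with
  | @comm_zz i j h =>
    simp only [map_mul, map_smul, freeLift_zF, invGen, smul_mul_smul_comm,
      star_z_mul_star_z_of_lt h, smul_smul]
    match_scalars
    linear_combination (-((p : ℂ) ^ (i : ℕ) * (p : ℂ) ^ (j : ℕ))) * hqp
  | @comm_zsz i j h =>
    simp only [map_mul, map_smul, freeLift_zF, freeLift_zsF, invGen, smul_mul_smul_comm,
      star_z_mul_z_of_ne (Ne.symm h), smul_smul]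
    match_scalars
    linear_combination (-((p : ℂ) ^ (i : ℕ) * (p : ℂ) ^ (j : ℕ))) * hqp
  | ccr i =>
    simp only [map_mul, map_add, map_smul, map_sum, freeLift_zF, freeLift_zsF, invGen,
      smul_mul_smul_comm, ← pow_add, ← two_mul]
    rw [sum_Ioi_pow_smul_of_eq_add_sum_Ioi _ star_z_mul_z_self, star_z_mul_z_self]
    match_scalars
    · ring
    · linear_combination (((q : ℂ) * p + 1) * (p : ℂ) ^ (2 * (i : ℕ))) * hqp
  | sphere_eq =>
    simp only [map_sum, map_mul, map_one, freeLift_zF, freeLift_zsF, invGen,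
      smul_mul_smul_comm, ← pow_add, ← two_mul]
    rw [sum_pow_smul_of_eq_add_sum_Ioi _ star_z_mul_z_self, sum_z_mul_star_z]
  | star_rel _ ih =>
    rw [freeLift_starF invGen_swap, freeLift_starF invGen_swap, ih]

def invHom (hqp : q * p = 1) : Sphere n q →⋆ₐ[ℂ] Sphere n p where
  toAlgHom := RingQuot.liftAlgHom ℂ ⟨freeLift (invGen n p), freeLift_invGen_rel hqp⟩
  map_star' x := by
    obtain ⟨x, rfl⟩ := RingQuot.mkAlgHom_surjective ℂ (srel n q) x
    simp only [AlgHom.toFun_eq_coe, star_mkAlgHom, RingQuot.liftAlgHom_mkAlgHom_apply,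
      freeLift_starF invGen_swap]

lemma invHom_z (hqp : q * p = 1) (i : Fin (n + 1)) :
    invHom hqp (z n q i) = (p : ℂ) ^ (i : ℕ) • star (z n p i) :=
  (RingQuot.liftAlgHom_mkAlgHom_apply ..).trans (freeLift_zF _ i)

lemma invHom_comp_invHom (hqp : q * p = 1) (hpq : p * q = 1) :
    (invHom (n := n) hpq).comp (invHom hqp) = StarAlgHom.id ℂ (Sphere n q) := by
  refine Sphere.starAlgHom_ext fun i => ?_
  rw [StarAlgHom.comp_apply, invHom_z, map_smul, map_star, invHom_z, star_smul, star_star,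
    smul_smul, Complex.star_def, map_pow, Complex.conj_ofReal, ← mul_pow, ← Complex.ofReal_mul,
    hpq, Complex.ofReal_one, one_pow, one_smul]
  rfl

end Inversion

/-- For any `q > 0`, the *-algebras `A(S^{2n+1}_q)` and `A(S^{2n+1}_{q⁻¹})`
are isomorphic. -/
theorem sphere_iso_inv (n : ℕ) (q : ℝ) (hq : 0 < q) :
    Nonempty (Sphere n q ≃⋆ₐ[ℂ] Sphere n q⁻¹) := by
  have hqp : q * q⁻¹ = 1 := mul_inv_cancel₀ hq.ne'
  have hpq : q⁻¹ * q = 1 := inv_mul_cancel₀ hq.ne'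
  exact ⟨.ofStarAlgHom (invHom hqp) (invHom hpq)
    (invHom_comp_invHom hqp hpq) (invHom_comp_invHom hpq hqp)⟩

end QAlg
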